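/- Consider logistic regression gradients g(x,y;w) = (sigmoid(wᵀx) - y)·x. Suppose x₂,…,xₙ all lie in a linear subspace Γ of ℝ^d, x₁ ∉ Γ, and sigmoid(wᵀx₁) ≠ y₁. Then min over 2 ≤ i ≤ n of ‖g(x₁,y₁;w) - g(xᵢ,yᵢ;w)‖ ≥ |sigmoid(wᵀx₁) - y₁| · dist(x₁, Γ) > 0. In particular no point xᵢ (i ≥ 2) produces the same gradient as x₁. -/

import Mathlib

noncomputable def sigmoid (t : ℝ) : ℝ := 1 / (1 + Real.exp (-t))

/-- Logistic regression gradient `g(x,y;w) = (σ(wᵀx) - y) • x`. -/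
noncomputable def logGrad {d : ℕ} (w x : EuclideanSpace ℝ (Fin d)) (y : ℝ) :
    EuclideanSpace ℝ (Fin d) :=
  (sigmoid ((inner ℝ w x : ℝ)) - y) • x

theorem Submodule.norm_mul_infDist_le_norm_smul_sub {𝕜 E : Type*} [NormedField 𝕜]
    [SeminormedAddCommGroup E] [NormedSpace 𝕜 E] (K : Submodule 𝕜 E) (c : 𝕜) (x : E) {z : E}
    (hz : z ∈ K) : ‖c‖ * Metric.infDist x K ≤ ‖c • x - z‖ := by
  rcases eq_or_ne c 0 with rfl | hc
  · simp
  calc ‖c‖ * Metric.infDist x K ≤ ‖c‖ * ‖x - c⁻¹ • z‖ := by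
        gcongr
        simpa [dist_eq_norm] using Metric.infDist_le_dist_of_mem (K.smul_mem c⁻¹ hz)
    _ = ‖c • x - z‖ := by rw [← norm_smul, smul_sub, smul_inv_smul₀ hc]

/-- If `x₂,…,xₙ` lie in a subspace `Γ`, `x₁ ∉ Γ`, and `σ(wᵀx₁) ≠ y₁`, then every
gradient difference `‖g(x₁,y₁;w) - g(xᵢ,yᵢ;w)‖` is at least
`|σ(wᵀx₁) - y₁| · dist(x₁, Γ) > 0`; in particular no `xᵢ` gives the same gradient. -/
theorem logistic_gradient_separation {d n : ℕ}
    (Γ : Submodule ℝ (EuclideanSpace ℝ (Fin d)))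
    (w x₁ : EuclideanSpace ℝ (Fin d)) (y₁ : ℝ)
    (xs : Fin n → EuclideanSpace ℝ (Fin d)) (ys : Fin n → ℝ)
    (hxs : ∀ i, xs i ∈ Γ) (hx₁ : x₁ ∉ Γ)
    (hy : sigmoid ((inner ℝ w x₁ : ℝ)) ≠ y₁) :
    (∀ i, |sigmoid ((inner ℝ w x₁ : ℝ)) - y₁| *
        Metric.infDist x₁ (Γ : Set (EuclideanSpace ℝ (Fin d)))
        ≤ ‖logGrad w x₁ y₁ - logGrad w (xs i) (ys i)‖) ∧
      0 < |sigmoid ((inner ℝ w x₁ : ℝ)) - y₁| *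
        Metric.infDist x₁ (Γ : Set (EuclideanSpace ℝ (Fin d))) ∧
      ∀ i, logGrad w (xs i) (ys i) ≠ logGrad w x₁ y₁ := by
  -- `logGrad w (xs i) (ys i)` is a multiple of `xs i`, hence lies in `Γ`.
  have hbound : ∀ i, |sigmoid ((inner ℝ w x₁ : ℝ)) - y₁| *
      Metric.infDist x₁ (Γ : Set (EuclideanSpace ℝ (Fin d)))
      ≤ ‖logGrad w x₁ y₁ - logGrad w (xs i) (ys i)‖ := fun i =>
    Γ.norm_mul_infDist_le_norm_smul_sub _ x₁ (Γ.smul_mem _ (hxs i))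
  have hdist : 0 < Metric.infDist x₁ (Γ : Set (EuclideanSpace ℝ (Fin d))) :=
    (Γ.closed_of_finiteDimensional.notMem_iff_infDist_pos ⟨0, Γ.zero_mem⟩).mp hx₁
  have hpos := mul_pos (abs_pos.mpr (sub_ne_zero.mpr hy)) hdist
  exact ⟨hbound, hpos, fun i =>
    (sub_ne_zero.mp (norm_pos_iff.mp (hpos.trans_le (hbound i)))).symm⟩
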